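/- (Characterization of regular discrete Lagrangians.) Let E be a finite-dimensional real normed vector space and L : E × E → ℝ of class C². The following conditions are equivalent: (i) L is regular, i.e. for every p ∈ E×E the bilinear form M(p) is nondegenerate (equivalently, the linear map u ↦ M(p)(u, ·) from E to E* is bijective); (ii) the Legendre transformation 𝔽⁻L is a local diffeomorphism, i.e. for every p there exist open sets U ∋ p and V ⊆ E × E* such that 𝔽⁻L maps U bijectively onto V with Fréchet differentiable inverse; (iii) the Legendre transformation 𝔽⁺L is a local diffeomorphism in the same sense. -/

import Mathlib

variable {E : Type*} [NormedAddCommGroup E] [NormedSpace ℝ E]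

/-- The Fréchet derivative of `z ↦ L (z, y)` at `x`. -/
noncomputable def D1 (L : E × E → ℝ) (x y : E) : E →L[ℝ] ℝ :=
  fderiv ℝ (fun z => L (z, y)) x

/-- The Fréchet derivative of `z ↦ L (x, z)` at `y`. -/
noncomputable def D2 (L : E × E → ℝ) (x y : E) : E →L[ℝ] ℝ :=
  fderiv ℝ (fun z => L (x, z)) y

/-- The map `u ↦ M(p)(u, ·)` from `E` to `E*`, where `M(p)(u,v) = D²L(p)((u,0),(0,v))`
is the mixed second Fréchet derivative of `L` at `p`. -/
noncomputable def Mlin (L : E × E → ℝ) (p : E × E) : E → (E →L[ℝ] ℝ) := fun u =>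
  ((fderiv ℝ (fderiv ℝ L) p) (u, 0)).comp (ContinuousLinearMap.inr ℝ E E)

/-- The discrete Legendre transformation `𝔽⁻L(x,y) = (x, −D₁L(x,y))`. -/
noncomputable def FLegMinus (L : E × E → ℝ) : E × E → E × (E →L[ℝ] ℝ) :=
  fun p => (p.1, -(D1 L p.1 p.2))

/-- The discrete Legendre transformation `𝔽⁺L(x,y) = (y, D₂L(x,y))`. -/
noncomputable def FLegPlus (L : E × E → ℝ) : E × E → E × (E →L[ℝ] ℝ) :=
  fun p => (p.2, D2 L p.1 p.2)

/-- `F` is a local diffeomorphism: around every point there are open sets `U`, `V` such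
that `F` maps `U` bijectively onto `V` with Fréchet differentiable inverse. -/
def IsLocalDiffeo {X Y : Type*} [NormedAddCommGroup X] [NormedSpace ℝ X]
    [NormedAddCommGroup Y] [NormedSpace ℝ Y] (F : X → Y) : Prop :=
  ∀ p : X, ∃ (U : Set X) (V : Set Y), IsOpen U ∧ IsOpen V ∧ p ∈ U ∧
    Set.BijOn F U V ∧ ∃ g : Y → X, Set.InvOn g F U V ∧ DifferentiableOn ℝ g V


open ContinuousLinearMap Set Function Filter Module

section Aux

variable {X Y : Type*} [NormedAddCommGroup X] [NormedSpace ℝ X]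
  [NormedAddCommGroup Y] [NormedSpace ℝ Y]

/-- generic IFT: everywhere-invertible strict derivative gives local diffeo property -/
theorem aux_isLocalDiffeo_of_strict [CompleteSpace X] (F : X → Y)
    (hA : ∀ p : X, ∃ e : X ≃L[ℝ] Y, HasStrictFDerivAt F (e : X →L[ℝ] Y) p) :
    ∀ p : X, ∃ (U : Set X) (V : Set Y), IsOpen U ∧ IsOpen V ∧ p ∈ U ∧
      Set.BijOn F U V ∧ ∃ g : Y → X, Set.InvOn g F U V ∧ DifferentiableOn ℝ g V := by
  intro p
  obtain ⟨e, he⟩ := hA p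
  set Φ := he.toOpenPartialHomeomorph F with hΦ
  have hcoe : (Φ : X → Y) = F := he.toOpenPartialHomeomorph_coe
  refine ⟨Φ.source, Φ.target, Φ.open_source, Φ.open_target,
    he.mem_toOpenPartialHomeomorph_source, ?_, Φ.symm, ?_, ?_⟩
  · have := Φ.bijOn
    rwa [hcoe] at this
  · have := Φ.invOn
    rwa [hcoe] at this
  · intro q hq
    set p' : X := Φ.symm q with hp'
    have hp'src : p' ∈ Φ.source := Φ.map_target hq
    have hFp' : F p' = q := by rw [← hcoe]; exact Φ.right_inv hq
    obtain ⟨e', he'⟩ := hA p'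
    have hinv := he'.to_localInverse
    have hdiff : DifferentiableAt ℝ (he'.localInverse F _ _) q := by
      rw [← hFp']; exact hinv.differentiableAt
    have hev : Φ.symm =ᶠ[nhds q] he'.localInverse F _ _ := by
      have hcont : ContinuousAt Φ.symm q := Φ.continuousAt_symm hq
      have h1 : ∀ᶠ x in nhds p', he'.localInverse F _ _ (F x) = x :=
        he'.eventually_left_inverse
      have h2 : ∀ᶠ q' in nhds q, F (Φ.symm q') = q' := by
        filter_upwards [Φ.open_target.mem_nhds hq] with q' hq'
        rw [← hcoe]; exact Φ.right_inv hq'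
      have h3 := hcont.eventually h1
      filter_upwards [h2, h3] with q' h2' h3'
      rw [← h3', h2']
    exact ((hev.differentiableAt_iff).mpr hdiff).differentiableWithinAt

/-- converse: a local diffeo at p with differentiable F forces the derivative to be bijective -/
theorem aux_bij_of_localDiffeo (F : X → Y) (p : X) (A : X →L[ℝ] Y)
    (hAp : HasFDerivAt F A p)
    (hld : ∃ (U : Set X) (V : Set Y), IsOpen U ∧ IsOpen V ∧ p ∈ U ∧
      Set.BijOn F U V ∧ ∃ g : Y → X, Set.InvOn g F U V ∧ DifferentiableOn ℝ g V) :
    Function.Bijective A := by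
  obtain ⟨U, V, hU, hV, hpU, hbij, g, hinv, hg⟩ := hld
  have hqV : F p ∈ V := hbij.mapsTo hpU
  have hgq : DifferentiableAt ℝ g (F p) := (hg (F p) hqV).differentiableAt (hV.mem_nhds hqV)
  have hgFp : g (F p) = p := hinv.1 hpU
  -- left: fderiv g (F p) ∘ A = id
  have hcomp1 : HasFDerivAt (g ∘ F) ((fderiv ℝ g (F p)).comp A) p :=
    hgq.hasFDerivAt.comp p hAp
  have hid1 : HasFDerivAt (g ∘ F) (ContinuousLinearMap.id ℝ X) p := by
    have hev : (g ∘ F) =ᶠ[nhds p] id := by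
      filter_upwards [hU.mem_nhds hpU] with x hx
      exact hinv.1 hx
    exact (hasFDerivAt_id p).congr_of_eventuallyEq hev
  have h1 : (fderiv ℝ g (F p)).comp A = ContinuousLinearMap.id ℝ X := hcomp1.unique hid1
  -- right: A ∘ fderiv g (F p) = id
  have hAgq : HasFDerivAt F A (g (F p)) := by rw [hgFp]; exact hAp
  have hcomp2 : HasFDerivAt (F ∘ g) (A.comp (fderiv ℝ g (F p))) (F p) :=
    hAgq.comp (F p) hgq.hasFDerivAt
  have hid2 : HasFDerivAt (F ∘ g) (ContinuousLinearMap.id ℝ Y) (F p) := by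
    have hev : (F ∘ g) =ᶠ[nhds (F p)] id := by
      filter_upwards [hV.mem_nhds hqV] with y hy
      exact hinv.2 hy
    exact (hasFDerivAt_id (F p)).congr_of_eventuallyEq hev
  have h2 : A.comp (fderiv ℝ g (F p)) = ContinuousLinearMap.id ℝ Y := hcomp2.unique hid2
  constructor
  · intro x y hxy
    have hx := DFunLike.congr_fun h1 x
    have hy := DFunLike.congr_fun h1 y
    simp only [ContinuousLinearMap.comp_apply, ContinuousLinearMap.id_apply,
      ContinuousLinearMap.coe_id'] at hx hy
    rw [← hx, ← hy, hxy]
  · intro y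
    refine ⟨fderiv ℝ g (F p) y, ?_⟩
    have := DFunLike.congr_fun h2 y
    simpa using this

end Aux




theorem aux_shear_fst (C : (E × E) →L[ℝ] (E →L[ℝ] ℝ)) :
    Function.Bijective (fun q : E × E => (q.1, C q)) ↔
      Function.Bijective (fun v : E => C (0, v)) := by
  constructor
  · rintro ⟨hinj, hsurj⟩
    constructor
    · intro v v' h
      dsimp only at h
      have h2 : ((0 : E), C (0, v)) = ((0 : E), C (0, v')) := by rw [h]
      have h3 := hinj (a₁ := (0, v)) (a₂ := (0, v')) h2
      exact congrArg Prod.snd h3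
    · intro φ
      obtain ⟨q, hq⟩ := hsurj (0, φ)
      dsimp only at hq
      obtain ⟨h1, h2⟩ := Prod.ext_iff.mp hq
      dsimp only at h1 h2
      refine ⟨q.2, ?_⟩
      dsimp only
      rw [← h2]; congr 1
      exact Prod.ext_iff.mpr ⟨h1.symm, rfl⟩
  · rintro ⟨hinj, hsurj⟩
    constructor
    · intro q q' h
      dsimp only at h
      obtain ⟨h1, h2⟩ := Prod.ext_iff.mp h
      dsimp only at h1 h2
      have e1 : C q = C (q.1, 0) + C (0, q.2) := by
        rw [← map_add]; congr 1; simp [Prod.ext_iff]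
      have e2 : C q' = C (q'.1, 0) + C (0, q'.2) := by
        rw [← map_add]; congr 1; simp [Prod.ext_iff]
      rw [e1, e2, h1] at h2
      have h4 : C (0, q.2) = C (0, q'.2) := add_left_cancel h2
      have h5 := hinj h4
      exact Prod.ext_iff.mpr ⟨h1, h5⟩
    · rintro ⟨x, φ⟩
      obtain ⟨v, hv⟩ := hsurj (φ - C (x, 0))
      dsimp only at hv
      refine ⟨(x, v), ?_⟩
      have e : C (x, v) = C (x, 0) + C (0, v) := by
        rw [← map_add]; congr 1; simp [Prod.ext_iff]
      simp [e, hv]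

theorem aux_shear_snd (C : (E × E) →L[ℝ] (E →L[ℝ] ℝ)) :
    Function.Bijective (fun q : E × E => (q.2, C q)) ↔
      Function.Bijective (fun u : E => C (u, 0)) := by
  constructor
  · rintro ⟨hinj, hsurj⟩
    constructor
    · intro u u' h
      dsimp only at h
      have h2 : ((0 : E), C (u, 0)) = ((0 : E), C (u', 0)) := by rw [h]
      have h3 := hinj (a₁ := (u, 0)) (a₂ := (u', 0)) h2
      exact congrArg Prod.fst h3
    · intro φ
      obtain ⟨q, hq⟩ := hsurj (0, φ)
      dsimp only at hq
      obtain ⟨h1, h2⟩ := Prod.ext_iff.mp hq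
      dsimp only at h1 h2
      refine ⟨q.1, ?_⟩
      dsimp only
      rw [← h2]; congr 1
      exact Prod.ext_iff.mpr ⟨rfl, h1.symm⟩
  · rintro ⟨hinj, hsurj⟩
    constructor
    · intro q q' h
      dsimp only at h
      obtain ⟨h1, h2⟩ := Prod.ext_iff.mp h
      dsimp only at h1 h2
      have e1 : C q = C (0, q.2) + C (q.1, 0) := by
        rw [← map_add]; congr 1; simp [Prod.ext_iff]
      have e2 : C q' = C (0, q'.2) + C (q'.1, 0) := by
        rw [← map_add]; congr 1; simp [Prod.ext_iff]
      rw [e1, e2, h1] at h2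
      have h4 : C (q.1, 0) = C (q'.1, 0) := add_left_cancel h2
      have h5 := hinj h4
      exact Prod.ext_iff.mpr ⟨h5, h1⟩
    · rintro ⟨y, φ⟩
      obtain ⟨u, hu⟩ := hsurj (φ - C (0, y))
      dsimp only at hu
      refine ⟨(u, y), ?_⟩
      have e : C (u, y) = C (0, y) + C (u, 0) := by
        rw [← map_add]; congr 1; simp [Prod.ext_iff]
      simp [e, hu]

theorem aux_flip_bij [FiniteDimensional ℝ E] (M S : E →L[ℝ] (E →L[ℝ] ℝ))
    (h : ∀ u v, S v u = M u v) (hM : Function.Bijective M) : Function.Bijective S := by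
  have key : ∀ v, S v = 0 → v = 0 := by
    intro v hv
    apply NormedSpace.eq_zero_of_forall_dual_eq_zero ℝ
    intro ψ
    obtain ⟨u, hu⟩ := hM.2 ψ
    have h5 := h u v
    rw [hv] at h5
    simp only [ContinuousLinearMap.zero_apply] at h5
    rw [← hu]
    exact h5.symm
  have hinj : Function.Injective S := by
    intro v v' hvv'
    have h6 : S (v - v') = 0 := by rw [map_sub, hvv', sub_self]
    exact sub_eq_zero.mp (key _ h6)
  have hfr : finrank ℝ E = finrank ℝ (E →L[ℝ] ℝ) := by
    rw [(LinearMap.toContinuousLinearMap (𝕜 := ℝ) (E := E) (F' := ℝ)).symm.finrank_eq]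
    exact (Subspace.dual_finrank_eq (K := ℝ) (V := E)).symm
  have hinj' : Function.Injective (S : E →ₗ[ℝ] (E →L[ℝ] ℝ)) := hinj
  have hsurj' := (LinearMap.injective_iff_surjective_of_finrank_eq_finrank hfr).mp hinj'
  exact ⟨hinj, hsurj'⟩



noncomputable def auxT1 : ((E × E) →L[ℝ] ℝ) →L[ℝ] (E →L[ℝ] ℝ) :=
  (ContinuousLinearMap.compL ℝ E (E × E) ℝ).flip (ContinuousLinearMap.inl ℝ E E)
noncomputable def auxT2 : ((E × E) →L[ℝ] ℝ) →L[ℝ] (E →L[ℝ] ℝ) :=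
  (ContinuousLinearMap.compL ℝ E (E × E) ℝ).flip (ContinuousLinearMap.inr ℝ E E)

theorem aux_D1_eq (L : E × E → ℝ) (hd : Differentiable ℝ L) (x y : E) :
    D1 L x y = (fderiv ℝ L (x, y)).comp (ContinuousLinearMap.inl ℝ E E) :=
  ((hd (x, y)).hasFDerivAt.comp x (hasFDerivAt_prodMk_left x y)).fderiv

theorem aux_D2_eq (L : E × E → ℝ) (hd : Differentiable ℝ L) (x y : E) :
    D2 L x y = (fderiv ℝ L (x, y)).comp (ContinuousLinearMap.inr ℝ E E) :=
  ((hd (x, y)).hasFDerivAt.comp y (hasFDerivAt_prodMk_right x y)).fderiv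

theorem aux_strict_fderiv (L : E × E → ℝ) (hL : ContDiff ℝ 2 L) (p : E × E) :
    HasStrictFDerivAt (fderiv ℝ L) (fderiv ℝ (fderiv ℝ L) p) p := by
  have h2 : ContDiff ℝ 1 (fderiv ℝ L) := hL.fderiv_right (by norm_num)
  exact h2.contDiffAt.hasStrictFDerivAt one_ne_zero

set_option maxHeartbeats 1000000 in
theorem aux_strict_minus (L : E × E → ℝ) (hL : ContDiff ℝ 2 L) (p : E × E) :
    HasStrictFDerivAt (FLegMinus L)
      ((ContinuousLinearMap.fst ℝ E E).prod
        (-(auxT1.comp (fderiv ℝ (fderiv ℝ L) p)))) p := by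
  have hd : Differentiable ℝ L := hL.differentiable two_ne_zero
  have heq : FLegMinus L = fun q => (q.1, -(auxT1 (fderiv ℝ L q))) := by
    funext q
    show (q.1, -(D1 L q.1 q.2)) = _
    rw [aux_D1_eq L hd]
    simp [auxT1]
  rw [heq]
  exact HasStrictFDerivAt.prodMk hasStrictFDerivAt_fst
    ((auxT1.hasStrictFDerivAt.comp p (aux_strict_fderiv L hL p)).neg)

theorem aux_strict_plus (L : E × E → ℝ) (hL : ContDiff ℝ 2 L) (p : E × E) :
    HasStrictFDerivAt (FLegPlus L)
      ((ContinuousLinearMap.snd ℝ E E).prod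
        (auxT2.comp (fderiv ℝ (fderiv ℝ L) p))) p := by
  have hd : Differentiable ℝ L := hL.differentiable two_ne_zero
  have heq : FLegPlus L = fun q => (q.2, auxT2 (fderiv ℝ L q)) := by
    funext q
    show (q.2, D2 L q.1 q.2) = _
    rw [aux_D2_eq L hd]
    simp [auxT2]
  rw [heq]
  exact HasStrictFDerivAt.prodMk hasStrictFDerivAt_snd
    (auxT2.hasStrictFDerivAt.comp p (aux_strict_fderiv L hL p))

theorem aux_symm (L : E × E → ℝ) (hL : ContDiff ℝ 2 L) (p v w : E × E) :
    fderiv ℝ (fderiv ℝ L) p v w = fderiv ℝ (fderiv ℝ L) p w v := by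
  have hd : Differentiable ℝ L := hL.differentiable two_ne_zero
  exact second_derivative_symmetric (fun y => (hd y).hasFDerivAt)
    (aux_strict_fderiv L hL p).hasFDerivAt v w

theorem aux_cle {X Y : Type*} [NormedAddCommGroup X] [NormedSpace ℝ X]
    [NormedAddCommGroup Y] [NormedSpace ℝ Y] [FiniteDimensional ℝ X]
    (A : X →L[ℝ] Y) (h : Function.Bijective A) :
    ∃ e : X ≃L[ℝ] Y, (e : X →L[ℝ] Y) = A := by
  refine ⟨LinearEquiv.toContinuousLinearEquiv
    (LinearEquiv.ofBijective (A : X →ₗ[ℝ] Y) h), ?_⟩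
  ext x
  rfl

theorem aux_minus_bij_iff [FiniteDimensional ℝ E] (L : E × E → ℝ) (hL : ContDiff ℝ 2 L) (p : E × E) :
    Function.Bijective
      ⇑((ContinuousLinearMap.fst ℝ E E).prod
        (-(auxT1.comp (fderiv ℝ (fderiv ℝ L) p)))) ↔
      Function.Bijective (Mlin L p) := by
  set B := fderiv ℝ (fderiv ℝ L) p with hB
  set C : (E × E) →L[ℝ] (E →L[ℝ] ℝ) := -(auxT1.comp B) with hC
  have h1 : ⇑((ContinuousLinearMap.fst ℝ E E).prod C) = fun q : E × E => (q.1, C q) := rfl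
  rw [h1, aux_shear_fst C]
  set Sm : E →L[ℝ] (E →L[ℝ] ℝ) := auxT1.comp (B.comp (ContinuousLinearMap.inr ℝ E E)) with hSm
  have h2 : (fun v : E => C (0, v)) = (fun ψ : E →L[ℝ] ℝ => -ψ) ∘ ⇑Sm := by
    funext v
    simp [hC, hSm, auxT1]
  rw [h2, Function.Bijective.of_comp_iff' neg_involutive.bijective]
  set Mp : E →L[ℝ] (E →L[ℝ] ℝ) := auxT2.comp (B.comp (ContinuousLinearMap.inl ℝ E E)) with hMp
  have hMpc : ⇑Mp = Mlin L p := by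
    funext u
    ext v
    simp [hMp, auxT2, Mlin, hB]
  have hsymm1 : ∀ u v : E, Sm v u = Mp u v := by
    intro u v
    have := aux_symm L hL p (0, v) (u, 0)
    simpa [hSm, hMp, auxT1, auxT2] using this
  have hsymm2 : ∀ u v : E, Mp v u = Sm u v := by
    intro u v
    have := aux_symm L hL p (v, 0) (0, u)
    simpa [hSm, hMp, auxT1, auxT2] using this
  rw [← hMpc]
  exact ⟨fun h => aux_flip_bij Sm Mp hsymm2 h, fun h => aux_flip_bij Mp Sm hsymm1 h⟩

theorem aux_plus_bij_iff (L : E × E → ℝ) (hL : ContDiff ℝ 2 L) (p : E × E) :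
    Function.Bijective
      ⇑((ContinuousLinearMap.snd ℝ E E).prod
        (auxT2.comp (fderiv ℝ (fderiv ℝ L) p))) ↔
      Function.Bijective (Mlin L p) := by
  set B := fderiv ℝ (fderiv ℝ L) p with hB
  set C : (E × E) →L[ℝ] (E →L[ℝ] ℝ) := auxT2.comp B with hC
  have h1 : ⇑((ContinuousLinearMap.snd ℝ E E).prod C) = fun q : E × E => (q.2, C q) := rfl
  rw [h1, aux_shear_snd C]
  have h2 : (fun u : E => C (u, 0)) = Mlin L p := by
    funext u
    ext v
    simp [hC, auxT2, Mlin, hB]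
  rw [h2]

theorem regular_iff_legendre_localDiffeo'
    [FiniteDimensional ℝ E] (L : E × E → ℝ) (hL : ContDiff ℝ 2 L) :
    ((∀ p : E × E, Function.Bijective (Mlin L p)) ↔ IsLocalDiffeo (FLegMinus L))
      ∧
    ((∀ p : E × E, Function.Bijective (Mlin L p)) ↔ IsLocalDiffeo (FLegPlus L)) := by
  constructor
  · constructor
    · intro hreg
      apply aux_isLocalDiffeo_of_strict
      intro p
      obtain ⟨e, he⟩ := aux_cle _ ((aux_minus_bij_iff L hL p).mpr (hreg p))
      exact ⟨e, by rw [he]; exact aux_strict_minus L hL p⟩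
    · intro hld p
      exact (aux_minus_bij_iff L hL p).mp
        (aux_bij_of_localDiffeo (FLegMinus L) p _
          (aux_strict_minus L hL p).hasFDerivAt (hld p))
  · constructor
    · intro hreg
      apply aux_isLocalDiffeo_of_strict
      intro p
      obtain ⟨e, he⟩ := aux_cle _ ((aux_plus_bij_iff L hL p).mpr (hreg p))
      exact ⟨e, by rw [he]; exact aux_strict_plus L hL p⟩
    · intro hld p
      exact (aux_plus_bij_iff L hL p).mp
        (aux_bij_of_localDiffeo (FLegPlus L) p _
          (aux_strict_plus L hL p).hasFDerivAt (hld p))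


/-- Characterization of regular discrete Lagrangians on the pair groupoid:
`L` is regular (the mixed second derivative is everywhere nondegenerate) iff `𝔽⁻L`
is a local diffeomorphism, iff `𝔽⁺L` is a local diffeomorphism. -/
theorem regular_iff_legendre_localDiffeo
    [FiniteDimensional ℝ E] (L : E × E → ℝ) (hL : ContDiff ℝ 2 L) :
    ((∀ p : E × E, Function.Bijective (Mlin L p)) ↔ IsLocalDiffeo (FLegMinus L))
      ∧
    ((∀ p : E × E, Function.Bijective (Mlin L p)) ↔ IsLocalDiffeo (FLegPlus L)) := by
  exact regular_iff_legendre_localDiffeo' L hL
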